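/- Difference (arithmetic) proportion: in (ℤ, +, −, ℤ) (integers with addition, negation, and every integer as constant), for all integers a, b, c, d, if b − a = d − c then the analogical proportion a : b :: c : d holds, characteristically justified by z → z + b − a. -/

import Mathlib

/- Analogical proportions (Antić): single-variable terms over a language of algebras. -/

/-- A term over a language with function symbols `F` of arities `ar`, in the single variable `z`.
Constant symbols are function symbols of arity 0. -/
inductive Term (F : Type*) (ar : F → ℕ) : Type _ where
  | var : Term F ar
  | app : (f : F) → (Fin (ar f) → Term F ar) → Term F ar

/-- An algebra for the language `(F, ar)` with universe `A`. -/
structure Alg (F : Type*) (ar : F → ℕ) (A : Type*) where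
  interp : (f : F) → (Fin (ar f) → A) → A

variable {F : Type*} {ar : F → ℕ} {A B : Type*}

/-- Evaluation of a term at `z := x`. -/
def Term.eval (𝔸 : Alg F ar A) (x : A) : Term F ar → A
  | .var => x
  | .app f ts => 𝔸.interp f fun i => (ts i).eval 𝔸 x

/-- The set of justifications `s → t` of a pair `(a, b)` in the algebra `𝔸`:
pairs of terms such that `a = s(e)` and `b = t(e)` for some witness `e`. -/
def Jus (𝔸 : Alg F ar A) (a b : A) : Set (Term F ar × Term F ar) :=
  {p | ∃ e : A, p.1.eval 𝔸 e = a ∧ p.2.eval 𝔸 e = b}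

/-- Justifications of `a : b :: c : d` in `(𝔸, 𝔹)`. -/
def JusP (𝔸 : Alg F ar A) (𝔹 : Alg F ar B) (a b : A) (c d : B) :
    Set (Term F ar × Term F ar) :=
  Jus 𝔸 a b ∩ Jus 𝔹 c d

/-- `(𝔸, 𝔹) ⊨ a : b :: c : d`: the set of justifications is subset-maximal w.r.t. `d`. -/
def Proportion (𝔸 : Alg F ar A) (𝔹 : Alg F ar B) (a b : A) (c d : B) : Prop :=
  ∀ d' : B, JusP 𝔸 𝔹 a b c d ⊆ JusP 𝔸 𝔹 a b c d' →
    JusP 𝔸 𝔹 a b c d' ⊆ JusP 𝔸 𝔹 a b c d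

/-- `j` is a characteristic justification of `a : b :: c : d` in `(𝔸, 𝔹)`. -/
def CharJus (𝔸 : Alg F ar A) (𝔹 : Alg F ar B) (a b : A) (c d : B)
    (j : Term F ar × Term F ar) : Prop :=
  j ∈ JusP 𝔸 𝔹 a b c d ↔ Proportion 𝔸 𝔹 a b c d

/-- The language of `(ℤ, +, −, ℤ)`: addition, negation, and a constant symbol
for every integer. -/
inductive ZSym : Type | plus | neg | const : ℤ → ZSym
def zAr : ZSym → ℕ | .plus => 2 | .neg => 1 | .const _ => 0

/-- The algebra `(ℤ, +, −, ℤ)`. -/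
def ZAlg : Alg ZSym zAr ℤ :=
  ⟨fun f => match f with
    | .plus => fun v => v ⟨0, Nat.zero_lt_two⟩ + v ⟨1, Nat.one_lt_two⟩
    | .neg => fun v => -(v ⟨0, Nat.zero_lt_one⟩)
    | .const k => fun _ => k⟩

/-- The constant term `k`. -/
def constT (k : ℤ) : Term ZSym zAr := Term.app (.const k) (fun i => i.elim0)
/-- The sum `s + t` as a term. -/
def plusT (s t : Term ZSym zAr) : Term ZSym zAr := Term.app .plus (![s, t] : Fin 2 → _)
/-- The negation `−t` as a term. -/
def negT (t : Term ZSym zAr) : Term ZSym zAr := Term.app .neg (fun _ => t)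
/-- The term `n·t = t + ⋯ + t` (`n` times) for natural `n`. -/
def nsmulT : ℕ → Term ZSym zAr → Term ZSym zAr
  | 0, _ => constT 0
  | n + 1, t => plusT (nsmulT n t) t
/-- The term `k·t` for an integer `k` (negation of a repeated sum for `k < 0`). -/
def zsmulT (k : ℤ) (t : Term ZSym zAr) : Term ZSym zAr :=
  if 0 ≤ k then nsmulT k.toNat t else negT (nsmulT (-k).toNat t)
/-- The affine term `k·z + ℓ`. -/
def linT (k l : ℤ) : Term ZSym zAr := plusT (zsmulT k Term.var) (constT l)

/-! A justification of the form `z → t` pins down the fourth term: if it justifies `c : d'`,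
then `d' = t(c)`. Hence if `z → t` justifies both `a : b` and `c : d`, every `d'` whose
justifications contain those of `d` must equal `d`, so the proportion holds, and `z → t` is
characteristic. In `(ℤ, +, −, ℤ)`, `z → z + b − a` justifies both pairs exactly when
`b − a = d − c`. -/

@[simp]
theorem eval_var {𝔸 : Alg F ar A} (x : A) : (Term.var : Term F ar).eval 𝔸 x = x := rfl

theorem mem_jus_var_iff {𝔸 : Alg F ar A} {a b : A} {t : Term F ar} :
    (Term.var, t) ∈ Jus 𝔸 a b ↔ t.eval 𝔸 a = b := by
  constructor
  · rintro ⟨e, rfl, rfl⟩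
    rfl
  · intro h
    exact ⟨a, rfl, h⟩

theorem proportion_of_var_mem_jusP {𝔸 : Alg F ar A} {𝔹 : Alg F ar B} {a b : A} {c d : B}
    {t : Term F ar} (h : (Term.var, t) ∈ JusP 𝔸 𝔹 a b c d) : Proportion 𝔸 𝔹 a b c d := by
  intro d' hsub
  have hd' : t.eval 𝔹 c = d' := mem_jus_var_iff.1 (hsub h).2
  have hd : t.eval 𝔹 c = d := mem_jus_var_iff.1 h.2
  rw [← hd', hd]

@[simp]
theorem eval_constT (k x : ℤ) : (constT k).eval ZAlg x = k := rfl

@[simp]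
theorem eval_plusT (s t : Term ZSym zAr) (x : ℤ) :
    (plusT s t).eval ZAlg x = s.eval ZAlg x + t.eval ZAlg x := rfl

@[simp]
theorem eval_negT (t : Term ZSym zAr) (x : ℤ) : (negT t).eval ZAlg x = -t.eval ZAlg x := rfl

/-- difference (arithmetic) proportion: if `b − a = d − c` then
`a : b :: c : d` holds in `(ℤ, +, −, ℤ)`, characteristically justified by
`z → z + b − a`. -/
theorem difference_proportion (a b c d : ℤ) (h : b - a = d - c) :
    Proportion ZAlg ZAlg a b c d ∧
      CharJus ZAlg ZAlg a b c d
        (Term.var, plusT (plusT Term.var (constT b)) (negT (constT a))) := by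
  have hmem : (Term.var, plusT (plusT Term.var (constT b)) (negT (constT a))) ∈
      JusP ZAlg ZAlg a b c d :=
    ⟨mem_jus_var_iff.2 (by simp), mem_jus_var_iff.2 (by simp; omega)⟩
  have hprop := proportion_of_var_mem_jusP hmem
  exact ⟨hprop, iff_of_true hmem hprop⟩
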